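/- Let Z be a finite set, D a distribution on Z, and D_n the empirical distribution of n i.i.d. samples from D. Then for any r ≥ 0, Pr( KL(D_n, D) ≤ r ) ≥ 1 − (n+1)^{|Z|} exp(−rn). Consequently, with probability at least 1 − (n+1)^{|Z|} e^{−rn}, D lies in the set {D'' : KL(D_n, D'') ≤ r}. -/
import Mathlib


open scoped Pointwise BigOperators

/-- `p` is a probability distribution on the finite type `α`. -/
def IsDist {α : Type*} [Fintype α] (p : α → ℝ) : Prop :=
  (∀ z, 0 ≤ p z) ∧ ∑ z, p z = 1

/-- Expected value of `f` under the distribution `p` on the finite type `α`. -/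
def expect {α : Type*} [Fintype α] (p f : α → ℝ) : ℝ := ∑ z, p z * f z

/-- `γ` is a coupling of the distributions `p` and `q` on the finite type `α`. -/
def IsCoupling {α : Type*} [Fintype α] (γ : α × α → ℝ) (p q : α → ℝ) : Prop :=
  (∀ x, 0 ≤ γ x) ∧ (∀ z, ∑ z', γ (z, z') = p z) ∧ (∀ z', ∑ z, γ (z, z') = q z')

/-- The LP (optimal transport) discrepancy `LP_N(p, q)` between two distributions on
a finite set `Z ⊆ ℝ^d`: the least coupling mass placed on pairs `(z, z')` with
`z' − z ∉ N`. -/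
noncomputable def LPmetric {d : ℕ} {Z : Finset (Fin d → ℝ)} (N : Set (Fin d → ℝ))
    (p q : ↥Z → ℝ) : ℝ :=
  sInf {x | ∃ γ : ↥Z × ↥Z → ℝ, IsCoupling γ p q ∧
    x = ∑ w : ↥Z × ↥Z,
      Set.indicator {w : ↥Z × ↥Z | ¬ ((w.2 : Fin d → ℝ) - (w.1 : Fin d → ℝ)) ∈ N} γ w}

/-- Kullback–Leibler divergence between two distributions on a finite type, valued in
the extended reals, with the conventions `0 log (0/q) = 0` and `p log (p/0) = ⊤` for
`p > 0`. -/
noncomputable def KLdiv {α : Type*} [Fintype α] (p q : α → ℝ) : EReal :=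
  ∑ z, if p z = 0 then (0 : EReal) else
    if q z = 0 then (⊤ : EReal) else ((p z * Real.log (p z / q z) : ℝ) : EReal)

/-- Adversarial (evasion) loss: `ℓ^N(z) = max {f z' : z' ∈ Z, z' − z ∈ N}`. -/
noncomputable def advLoss {d : ℕ} (Z : Finset (Fin d → ℝ)) (N : Set (Fin d → ℝ))
    (f : ↥Z → ℝ) (z : ↥Z) : ℝ :=
  sSup {v | ∃ z' : ↥Z, ((z' : Fin d → ℝ) - (z : Fin d → ℝ)) ∈ N ∧ v = f z'}

open scoped Classical

/-- Probability weight of the sample `ω` of `n` i.i.d. draws from the distribution `D`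
on a finite type. -/
def prodw {α : Type*} [Fintype α] (D : α → ℝ) (n : ℕ) (ω : Fin n → α) : ℝ :=
  ∏ i, D (ω i)

/-- Empirical distribution of the sample `ω : Fin n → α`. -/
noncomputable def emp {α : Type*} [Fintype α] [DecidableEq α] (n : ℕ) (ω : Fin n → α)
    (z : α) : ℝ :=
  ((Finset.univ.filter fun i => ω i = z).card : ℝ) / n

section Aux
set_option linter.unusedSectionVars false
variable {α : Type*} [Fintype α] [DecidableEq α]

lemma prodw_eq (D : α → ℝ) (n : ℕ) (ω : Fin n → α) :
    prodw D n ω = ∏ z, D z ^ (Finset.univ.filter fun i => ω i = z).card := by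
  rw [prodw, ← Finset.prod_fiberwise Finset.univ ω (fun i => D (ω i))]
  refine Finset.prod_congr rfl fun z _ => ?_
  rw [Finset.prod_congr rfl (fun i hi => ?_), Finset.prod_const]
  simp only [Finset.mem_filter] at hi; rw [hi.2]

lemma sum_card_eq (n : ℕ) (ω : Fin n → α) :
    ∑ z, (Finset.univ.filter fun i => ω i = z).card = n := by
  rw [← Finset.card_eq_sum_card_fiberwise (f := ω) (s := Finset.univ) (t := Finset.univ)
    (fun x _ => Finset.mem_univ _)]
  simp

lemma sum_emp (n : ℕ) (hn : n ≠ 0) (ω : Fin n → α) : ∑ z, emp n ω z = 1 := by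
  unfold emp
  rw [← Finset.sum_div]
  rw [← Nat.cast_sum, sum_card_eq]
  field_simp

lemma sum_prodw (D : α → ℝ) (n : ℕ) : ∑ ω : Fin n → α, prodw D n ω = (∑ z, D z) ^ n := by
  unfold prodw
  rw [← Fintype.piFinset_univ, ← Finset.prod_univ_sum]
  simp [Finset.prod_const]

lemma ereal_coe_sum {β : Type*} (s : Finset β) (f : β → ℝ) :
    ((∑ x ∈ s, f x : ℝ) : EReal) = ∑ x ∈ s, ((f x : ℝ) : EReal) := by
  induction s using Finset.cons_induction with
  | empty => simp
  | cons a s ha ih => rw [Finset.sum_cons, Finset.sum_cons, EReal.coe_add, ih]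

lemma KL_coe {β : Type*} [Fintype β] (p q : β → ℝ) (h : ∀ z, p z ≠ 0 → q z ≠ 0) :
    KLdiv p q = ((∑ z, if p z = 0 then 0 else p z * Real.log (p z / q z) : ℝ) : EReal) := by
  rw [KLdiv, ereal_coe_sum]
  refine Finset.sum_congr rfl fun z _ => ?_
  by_cases hp : p z = 0
  · simp [hp]
  · rw [if_neg hp, if_neg hp, if_neg (h z hp)]

lemma emp_nonneg (n : ℕ) (ω : Fin n → α) (z : α) : 0 ≤ emp n ω z := by
  unfold emp; positivity

lemma prodw_nonneg (D : α → ℝ) (hD0 : ∀ z, 0 ≤ D z) (n : ℕ) (ω : Fin n → α) :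
    0 ≤ prodw D n ω := Finset.prod_nonneg fun i _ => hD0 _

lemma pointwise (D : α → ℝ) (hD0 : ∀ z, 0 ≤ D z) (n : ℕ) (hn : n ≠ 0) (r : ℝ)
    (ω : Fin n → α) (hbad : ¬ KLdiv (emp n ω) D ≤ (r : EReal)) :
    prodw D n ω ≤ Real.exp (-r * n) * prodw (emp n ω) n ω := by
  have hnR : (0:ℝ) < n := by positivity
  set k : α → ℕ := fun z => (Finset.univ.filter fun i => ω i = z).card with hk
  have hempdef : ∀ z, emp n ω z = (k z : ℝ) / n := fun z => rfl
  have hP0 : ∀ z, emp n ω z = 0 ↔ k z = 0 := by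
    intro z
    rw [hempdef, div_eq_zero_iff]
    constructor
    · rintro (h | h)
      · exact_mod_cast h
      · exact absurd h (by positivity)
    · intro h; left; exact_mod_cast h
  by_cases hcase : ∀ z, k z ≠ 0 → D z ≠ 0
  · -- KL is finite
    have hqc : ∀ z, emp n ω z ≠ 0 → D z ≠ 0 := fun z hz => hcase z (fun h0 => hz ((hP0 z).mpr h0))
    rw [KL_coe _ _ hqc] at hbad
    set s : ℝ := ∑ z, if emp n ω z = 0 then 0 else emp n ω z * Real.log (emp n ω z / D z) with hs
    have hrs : r < s := by
      by_contra hc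
      exact hbad (EReal.coe_le_coe_iff.mpr (not_lt.mp hc))
    -- restrict to support
    set S : Finset α := Finset.univ.filter fun z => k z ≠ 0 with hS
    have hDsup : ∀ z ∈ S, 0 < D z := by
      intro z hz
      simp only [hS, Finset.mem_filter] at hz
      exact lt_of_le_of_ne (hD0 z) (Ne.symm (hcase z hz.2))
    have hPsup : ∀ z ∈ S, 0 < emp n ω z := by
      intro z hz
      simp only [hS, Finset.mem_filter] at hz
      refine lt_of_le_of_ne (emp_nonneg n ω z) (Ne.symm ?_)
      exact fun h0 => hz.2 ((hP0 z).mp h0)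
    have hsS : s = ∑ z ∈ S, emp n ω z * Real.log (emp n ω z / D z) := by
      rw [hs, Finset.sum_filter]
      refine Finset.sum_congr rfl fun z _ => ?_
      by_cases h0 : k z = 0
      · simp [h0, (hP0 z).mpr h0]
      · rw [if_pos h0, if_neg (fun hc => h0 ((hP0 z).mp hc))]
    have hkz0 : ∀ z, z ∉ S → k z = 0 := by
      intro z hz
      by_contra h0
      exact hz (by simp [hS, Finset.mem_filter, h0])
    have hprodD : prodw D n ω = ∏ z ∈ S, D z ^ k z := by
      rw [prodw_eq]
      exact (Finset.prod_subset (Finset.subset_univ S)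
        fun z _ hz => by rw [show (Finset.univ.filter fun i => ω i = z).card = k z from rfl, hkz0 z hz, pow_zero]).symm
    have hprodP : prodw (emp n ω) n ω = ∏ z ∈ S, emp n ω z ^ k z := by
      rw [prodw_eq]
      exact (Finset.prod_subset (Finset.subset_univ S)
        fun z _ hz => by rw [show (Finset.univ.filter fun i => ω i = z).card = k z from rfl, hkz0 z hz, pow_zero]).symm
    have hterm : ∀ z ∈ S, D z ^ k z
        = emp n ω z ^ k z * Real.exp (-(n * (emp n ω z * Real.log (emp n ω z / D z)))) := by
      intro z hz
      have hD' := hDsup z hz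
      have hP' := hPsup z hz
      have hkz : (k z : ℝ) = n * emp n ω z := by
        rw [hempdef]; field_simp
      have hlog : Real.log (emp n ω z / D z) = Real.log (emp n ω z) - Real.log (D z) :=
        Real.log_div (ne_of_gt hP') (ne_of_gt hD')
      have : D z ^ k z = emp n ω z ^ k z * Real.exp ((k z : ℝ) * (Real.log (D z) - Real.log (emp n ω z))) := by
        rw [mul_comm ((k z:ℝ)) _, Real.exp_mul, Real.exp_sub, Real.exp_log hD', Real.exp_log hP',
          Real.rpow_natCast, div_pow]
        field_simp
      rw [this, hkz]
      congr 1
      rw [hlog]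
      ring_nf
    have hmain : prodw D n ω = prodw (emp n ω) n ω * Real.exp (-(n * s)) := by
      rw [hprodD, hprodP, Finset.prod_congr rfl hterm, Finset.prod_mul_distrib,
        ← Real.exp_sum, hsS, Finset.mul_sum, ← Finset.sum_neg_distrib]
    have hPnn : 0 ≤ prodw (emp n ω) n ω := prodw_nonneg _ (emp_nonneg n ω) n ω
    rw [hmain, mul_comm (prodw (emp n ω) n ω) _]
    refine mul_le_mul_of_nonneg_right ?_ hPnn
    apply Real.exp_le_exp.mpr
    rw [neg_mul]
    rw [neg_le_neg_iff]
    calc r * n = n * r := mul_comm _ _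
    _ ≤ n * s := by nlinarith
  · push_neg at hcase
    obtain ⟨z, hz, hDz⟩ := hcase
    have : prodw D n ω = 0 := by
      rw [prodw_eq]
      exact Finset.prod_eq_zero (Finset.mem_univ z) (by rw [hDz, zero_pow hz])
    rw [this]
    exact mul_nonneg (Real.exp_pos _).le (prodw_nonneg _ (emp_nonneg n ω) n ω)

lemma grouping (n : ℕ) (hn : n ≠ 0) (B : Finset (Fin n → α)) :
    ∑ ω ∈ B, prodw (emp n ω) n ω ≤ ((n : ℝ) + 1) ^ (Fintype.card α) := by
  have hnn : ∀ ω : Fin n → α, 0 ≤ prodw (emp n ω) n ω :=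
    fun ω => prodw_nonneg _ (emp_nonneg n ω) n ω
  have h1 : ∑ ω ∈ B, prodw (emp n ω) n ω ≤ ∑ ω : Fin n → α, prodw (emp n ω) n ω :=
    Finset.sum_le_sum_of_subset_of_nonneg (Finset.subset_univ B) fun ω _ _ => hnn ω
  refine h1.trans ?_
  set T : (Fin n → α) → (α → Fin (n + 1)) := fun ω z =>
    ⟨(Finset.univ.filter fun i => ω i = z).card,
      Nat.lt_succ_of_le (le_trans (Finset.card_filter_le _ _) (by simp))⟩ with hT
  rw [← Finset.sum_fiberwise Finset.univ T (fun ω => prodw (emp n ω) n ω)]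
  have hbound : ∀ t : α → Fin (n + 1),
      ∑ ω ∈ Finset.univ.filter (fun ω => T ω = t), prodw (emp n ω) n ω ≤ 1 := by
    intro t
    rcases Finset.eq_empty_or_nonempty (Finset.univ.filter (fun ω => T ω = t)) with he | ⟨ω₀, hω₀⟩
    · rw [he, Finset.sum_empty]; norm_num
    · have hω₀' : T ω₀ = t := (Finset.mem_filter.mp hω₀).2
      have hemp : ∀ ω ∈ Finset.univ.filter (fun ω => T ω = t), emp n ω = emp n ω₀ := by
        intro ω hω
        have hω' : T ω = t := (Finset.mem_filter.mp hω).2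
        funext z
        have h1 := congrFun hω' z
        have h2 := congrFun hω₀' z
        rw [← h2] at h1
        have hcard : (Finset.univ.filter fun i => ω i = z).card
            = (Finset.univ.filter fun i => ω₀ i = z).card := by
          simpa [hT, Fin.mk.injEq] using h1
        unfold emp
        rw [hcard]
      calc ∑ ω ∈ Finset.univ.filter (fun ω => T ω = t), prodw (emp n ω) n ω
          = ∑ ω ∈ Finset.univ.filter (fun ω => T ω = t), prodw (emp n ω₀) n ω :=
            Finset.sum_congr rfl fun ω hω => by rw [hemp ω hω]
        _ ≤ ∑ ω : Fin n → α, prodw (emp n ω₀) n ω :=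
            Finset.sum_le_sum_of_subset_of_nonneg (Finset.subset_univ _)
              (fun ω _ _ => prodw_nonneg _ (emp_nonneg n ω₀) n ω)
        _ = (∑ z, emp n ω₀ z) ^ n := sum_prodw _ n
        _ = 1 := by rw [sum_emp n hn ω₀, one_pow]
  calc ∑ t : α → Fin (n+1), ∑ ω ∈ Finset.univ.filter (fun ω => T ω = t), prodw (emp n ω) n ω
      ≤ ∑ _t : α → Fin (n+1), (1:ℝ) := Finset.sum_le_sum fun t _ => hbound t
    _ = ((n : ℝ) + 1) ^ (Fintype.card α) := by
        rw [Finset.sum_const, Finset.card_univ, Fintype.card_fun]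
        simp [Fintype.card_fin]

end Aux

/-- for the empirical distribution `D_n` of `n` i.i.d. samples from a
distribution `D` on a finite set `Z` and any `r ≥ 0`,
`Pr(KL(D_n, D) ≤ r) ≥ 1 − (n+1)^{|Z|} e^{−rn}`; equivalently, with that probability
`D` lies in `{D'' : KL(D_n, D'') ≤ r}`. -/
theorem kl_ball_coverage {α : Type*} [Fintype α] [DecidableEq α]
    (D : α → ℝ) (hD : IsDist D) (n : ℕ) (r : ℝ) (hr : 0 ≤ r) :
    1 - ((n : ℝ) + 1) ^ (Fintype.card α) * Real.exp (-r * n)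
      ≤ ∑ ω : Fin n → α,
          (if KLdiv (emp n ω) D ≤ (r : EReal) then prodw D n ω else 0) := by
  obtain ⟨hD0, hD1⟩ := hD
  rcases eq_or_ne n 0 with h0 | hn
  · subst h0
    have hkl : ∀ ω : Fin 0 → α, KLdiv (emp 0 ω) D ≤ (r : EReal) := by
      intro ω
      have h1 : KLdiv (emp 0 ω) D = 0 := by simp [KLdiv, emp]
      rw [h1, show (0 : EReal) = ((0:ℝ) : EReal) from rfl]
      exact EReal.coe_le_coe_iff.mpr hr
    have h2 : ∑ ω : Fin 0 → α, (if KLdiv (emp 0 ω) D ≤ (r : EReal) then prodw D 0 ω else 0)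
        = ∑ ω : Fin 0 → α, prodw D 0 ω :=
      Finset.sum_congr rfl fun ω _ => if_pos (hkl ω)
    rw [h2, sum_prodw, hD1]
    simp
  · set p : (Fin n → α) → Prop := fun ω => KLdiv (emp n ω) D ≤ (r : EReal) with hp
    have hsplit : ∑ ω : Fin n → α, (if p ω then prodw D n ω else 0)
        = ∑ ω ∈ Finset.univ.filter p, prodw D n ω := (Finset.sum_filter p _).symm
    have htot : ∑ ω ∈ Finset.univ.filter p, prodw D n ω
        + ∑ ω ∈ Finset.univ.filter (fun ω => ¬ p ω), prodw D n ω = 1 := by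
      rw [Finset.sum_filter_add_sum_filter_not, sum_prodw, hD1, one_pow]
    have hB : ∑ ω ∈ Finset.univ.filter (fun ω => ¬ p ω), prodw D n ω
        ≤ (((n:ℝ)+1) ^ Fintype.card α) * Real.exp (-r * n) := by
      calc ∑ ω ∈ Finset.univ.filter (fun ω => ¬ p ω), prodw D n ω
          ≤ ∑ ω ∈ Finset.univ.filter (fun ω => ¬ p ω),
              Real.exp (-r * n) * prodw (emp n ω) n ω :=
            Finset.sum_le_sum fun ω hω => pointwise D hD0 n hn r ω ((Finset.mem_filter.mp hω).2)
        _ = Real.exp (-r * n) * ∑ ω ∈ Finset.univ.filter (fun ω => ¬ p ω),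
              prodw (emp n ω) n ω := by rw [Finset.mul_sum]
        _ ≤ Real.exp (-r * n) * (((n:ℝ)+1) ^ Fintype.card α) :=
            mul_le_mul_of_nonneg_left (grouping n hn _) (Real.exp_pos _).le
        _ = (((n:ℝ)+1) ^ Fintype.card α) * Real.exp (-r * n) := mul_comm _ _
    rw [hsplit]
    linarith
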